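/- For the clipped linear sigmoid α of Proposition 1, for fixed Δ ∈ ℝ, β = 1, ε ∈ [0,1/2), one has the expansion α(Δ, s, 1, ε) = (1−2ε)√(2/π) e^{−Δ²/2}(1 + (Δ²−1)/(24 s²) + O(1/s⁴)) as s → ∞; in particular α(Δ, s, 1, ε) → (1−2ε)√(2/π) e^{−Δ²/2} as s → ∞. -/

import Mathlib

/-!
Write `G x = erf (x / √2)`, so that `G' = √(2/π) e^{-x²/2}` and the higher derivatives of `G` are
Hermite polynomials times the same Gaussian. With `h = 1/(2s)`, `α s / (1 - 2ε)` is the symmetric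
difference quotient `(G(Δ+h) - G(Δ-h)) / (2h)`. Its Taylor expansion around `Δ` has only odd powers,
`G(Δ+h) - G(Δ-h) = 2h G'(Δ) + h³/3 G'''(Δ) + O(h⁵)`, with the error controlled by `sup |G⁽⁵⁾|`,
and `G''' = √(2/π) (x² - 1) e^{-x²/2}` yields the `(Δ² - 1)/(24 s²)` correction.
-/

open Real Filter

/-- The error function `erf x = (2/√π) ∫₀ˣ e^{-t²} dt`. -/
noncomputable def erf (x : ℝ) : ℝ := (2 / Real.sqrt π) * ∫ t in (0:ℝ)..x, Real.exp (-t ^ 2)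

theorem abs_le_div_mul_pow_succ_of_hasDerivAt {F F' : ℝ → ℝ} {C : ℝ} {n : ℕ}
    (hF : ∀ x, HasDerivAt F (F' x) x) (hF0 : F 0 = 0)
    (hF' : ∀ x, 0 ≤ x → |F' x| ≤ C * x ^ n) {h : ℝ} (hh : 0 ≤ h) :
    |F h| ≤ C / (n + 1) * h ^ (n + 1) := by
  have hB (x : ℝ) : HasDerivAt (fun x => C / (n + 1) * x ^ (n + 1)) (C * x ^ n) x :=
    (((hasDerivAt_pow (n + 1) x).const_mul (C / (n + 1)))).congr_deriv (by simp [field])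
  exact image_norm_le_of_norm_deriv_right_le_deriv_boundary (a := 0) (b := h)
    (fun x _ => (hF x).continuousAt.continuousWithinAt) (fun x _ => (hF x).hasDerivWithinAt)
    (by simp [hF0]) hB (fun x hx => hF' x hx.1) ⟨hh, le_rfl⟩

section CentralDifference

variable {f f' : ℝ → ℝ}

theorem hasDerivAt_comp_add_sub_comp_sub (hf : ∀ x, HasDerivAt f (f' x) x) (a t : ℝ) :
    HasDerivAt (fun t => f (a + t) - f (a - t)) (f' (a + t) + f' (a - t)) t :=
  (((hf _).comp_const_add a t).sub ((hf _).comp_const_sub a t)).congr_deriv (sub_neg_eq_add _ _)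

theorem hasDerivAt_comp_add_add_comp_sub (hf : ∀ x, HasDerivAt f (f' x) x) (a t : ℝ) :
    HasDerivAt (fun t => f (a + t) + f (a - t)) (f' (a + t) - f' (a - t)) t :=
  (((hf _).comp_const_add a t).add ((hf _).comp_const_sub a t)).congr_deriv (sub_eq_add_neg _ _).symm

end CentralDifference

theorem abs_central_difference_sub_le {f₀ f₁ f₂ f₃ f₄ f₅ : ℝ → ℝ} {M : ℝ}
    (h₀ : ∀ x, HasDerivAt f₀ (f₁ x) x) (h₁ : ∀ x, HasDerivAt f₁ (f₂ x) x)
    (h₂ : ∀ x, HasDerivAt f₂ (f₃ x) x) (h₃ : ∀ x, HasDerivAt f₃ (f₄ x) x)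
    (h₄ : ∀ x, HasDerivAt f₄ (f₅ x) x) (hM : ∀ x, |f₅ x| ≤ M) (a : ℝ) {h : ℝ} (hh : 0 ≤ h) :
    |f₀ (a + h) - f₀ (a - h) - 2 * h * f₁ a - h ^ 3 / 3 * f₃ a| ≤ M / 60 * h ^ 5 := by
  -- `eₖ` bounds the Taylor remainder of the odd or even part of `fₖ` about `a`; each is obtained
  -- from the next by integrating from `0`, starting from `|f₅ (a + t) ± f₅ (a - t)| ≤ 2M`.
  have e₄ (t : ℝ) (ht : 0 ≤ t) : |f₄ (a + t) - f₄ (a - t)| ≤ 2 * M * t ^ 1 := by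
    refine (abs_le_div_mul_pow_succ_of_hasDerivAt (C := 2 * M) (n := 0)
      (hasDerivAt_comp_add_sub_comp_sub h₄ a) (by simp) (fun x _ => ?_) ht).trans_eq (by simp)
    calc |f₅ (a + x) + f₅ (a - x)| ≤ M + M := (abs_add_le _ _).trans (add_le_add (hM _) (hM _))
      _ = 2 * M * x ^ 0 := by ring
  have e₃ (t : ℝ) (ht : 0 ≤ t) : |f₃ (a + t) + f₃ (a - t) - 2 * f₃ a| ≤ M * t ^ 2 :=
    (abs_le_div_mul_pow_succ_of_hasDerivAt (F := fun t => f₃ (a + t) + f₃ (a - t) - 2 * f₃ a)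
      (fun t => (hasDerivAt_comp_add_add_comp_sub h₃ a t).sub_const _) (by simp; ring) e₄
      ht).trans_eq (by push_cast; ring)
  have e₂ (t : ℝ) (ht : 0 ≤ t) : |f₂ (a + t) - f₂ (a - t) - 2 * t * f₃ a| ≤ M / 3 * t ^ 3 := by
    refine (abs_le_div_mul_pow_succ_of_hasDerivAt
      (F := fun t => f₂ (a + t) - f₂ (a - t) - 2 * t * f₃ a)
      (fun t => (hasDerivAt_comp_add_sub_comp_sub h₂ a t).sub ?_) (by simp) e₃
      ht).trans_eq (by push_cast; ring)
    simpa using ((hasDerivAt_id t).const_mul 2).mul_const (f₃ a)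
  have e₁ (t : ℝ) (ht : 0 ≤ t) :
      |f₁ (a + t) + f₁ (a - t) - 2 * f₁ a - t ^ 2 * f₃ a| ≤ M / 12 * t ^ 4 := by
    refine (abs_le_div_mul_pow_succ_of_hasDerivAt
      (F := fun t => f₁ (a + t) + f₁ (a - t) - 2 * f₁ a - t ^ 2 * f₃ a)
      (fun t => ((hasDerivAt_comp_add_add_comp_sub h₁ a t).sub_const _).sub ?_) (by simp; ring)
      e₂ ht).trans_eq (by push_cast; ring)
    exact ((hasDerivAt_pow 2 t).mul_const (f₃ a)).congr_deriv (by push_cast; ring)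
  refine (abs_le_div_mul_pow_succ_of_hasDerivAt
    (F := fun t => f₀ (a + t) - f₀ (a - t) - 2 * t * f₁ a - t ^ 3 / 3 * f₃ a)
    (fun t => (((hasDerivAt_comp_add_sub_comp_sub h₀ a t).sub ?_).sub ?_)) (by simp) e₁
    hh).trans_eq (by push_cast; ring)
  · simpa using ((hasDerivAt_id t).const_mul 2).mul_const (f₁ a)
  · exact (((hasDerivAt_pow 3 t).div_const 3).mul_const (f₃ a)).congr_deriv (by push_cast; ring)

theorem hasDerivAt_erf (x : ℝ) : HasDerivAt erf (2 / √π * exp (-x ^ 2)) x :=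
  ((Continuous.integral_hasStrictDerivAt (by fun_prop) 0 x).hasDerivAt).const_mul _

theorem hasDerivAt_erf_div_sqrt_two (x : ℝ) :
    HasDerivAt (fun x => erf (x / √2)) (√(2 / π) * exp (-(x ^ 2 / 2))) x := by
  refine ((hasDerivAt_erf _).comp x ((hasDerivAt_id x).div_const √2)).congr_deriv ?_
  have h2 : (√2) ^ 2 = 2 := sq_sqrt zero_le_two
  rw [sqrt_div zero_le_two, div_pow, h2, id]
  field_simp
  rw [h2]

theorem hasDerivAt_iterate_deriv_gaussian (k : ℕ) (x : ℝ) :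
    HasDerivAt (deriv^[k] fun y => exp (-(y ^ 2 / 2)))
      (deriv^[k + 1] (fun y => exp (-(y ^ 2 / 2))) x) x := by
  rw [Function.iterate_succ_apply']
  refine DifferentiableAt.hasDerivAt ?_
  rw [funext (Polynomial.deriv_gaussian_eq_hermite_mul_gaussian k)]
  have := Polynomial.differentiable_aeval (Polynomial.hermite k) (𝕜 := ℝ)
  fun_prop

theorem aeval_hermite_two (x : ℝ) : Polynomial.aeval x (Polynomial.hermite 2) = x ^ 2 - 1 := by
  simp [Polynomial.hermite_succ]
  ring

theorem aeval_hermite_four (x : ℝ) :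
    Polynomial.aeval x (Polynomial.hermite 4) = x ^ 4 - 6 * x ^ 2 + 3 := by
  simp [Polynomial.hermite_succ]
  ring

theorem iterate_deriv_gaussian_two (x : ℝ) :
    deriv^[2] (fun y => exp (-(y ^ 2 / 2))) x = (x ^ 2 - 1) * exp (-(x ^ 2 / 2)) := by
  rw [Polynomial.deriv_gaussian_eq_hermite_mul_gaussian, aeval_hermite_two]
  ring

theorem abs_iterate_deriv_gaussian_four_le (x : ℝ) :
    |deriv^[4] (fun y => exp (-(y ^ 2 / 2))) x| ≤ 12 := by
  have hexp := quadratic_le_exp_of_nonneg (x := x ^ 2 / 2) (by positivity)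
  have hpoly : |x ^ 4 - 6 * x ^ 2 + 3| ≤ 12 * exp (x ^ 2 / 2) :=
    abs_le.mpr ⟨by nlinarith [sq_nonneg x], by nlinarith [sq_nonneg x]⟩
  rw [Polynomial.deriv_gaussian_eq_hermite_mul_gaussian, aeval_hermite_four, abs_mul, abs_mul,
    abs_of_pos (exp_pos _)]
  calc |(-1 : ℝ) ^ 4| * |x ^ 4 - 6 * x ^ 2 + 3| * exp (-(x ^ 2 / 2))
      ≤ 1 * (12 * exp (x ^ 2 / 2)) * exp (-(x ^ 2 / 2)) := by norm_num; gcongr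
    _ = 12 := by rw [one_mul, mul_assoc, ← exp_add, add_neg_cancel, exp_zero, mul_one]

theorem abs_erf_central_difference_sub_le (a : ℝ) {h : ℝ} (hh : 0 ≤ h) :
    |erf ((a + h) / √2) - erf ((a - h) / √2) - 2 * h * (√(2 / π) * exp (-(a ^ 2 / 2)))
      - h ^ 3 / 3 * (√(2 / π) * ((a ^ 2 - 1) * exp (-(a ^ 2 / 2))))| ≤ √(2 / π) / 5 * h ^ 5 := by
  have hf (k : ℕ) (x : ℝ) := (hasDerivAt_iterate_deriv_gaussian k x).const_mul √(2 / π)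
  have hM (x : ℝ) : |√(2 / π) * deriv^[4] (fun y => exp (-(y ^ 2 / 2))) x| ≤ 12 * √(2 / π) := by
    rw [abs_mul, abs_of_nonneg (sqrt_nonneg _), mul_comm]
    gcongr
    exact abs_iterate_deriv_gaussian_four_le x
  have key := abs_central_difference_sub_le hasDerivAt_erf_div_sqrt_two (hf 0) (hf 1) (hf 2)
    (hf 3) hM a hh
  simp only [Nat.reduceAdd, iterate_deriv_gaussian_two] at key
  exact key.trans_eq (by ring)

theorem tendsto_of_abs_sub_le_div_pow {f g : ℝ → ℝ} {A c : ℝ} {n : ℕ} (hn : n ≠ 0)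
    (hg : Tendsto g atTop (nhds A)) (hfg : ∀ᶠ s in atTop, |f s - g s| ≤ c / s ^ n) :
    Tendsto f atTop (nhds A) := by
  refine hg.congr_dist (squeeze_zero' (.of_forall fun s => dist_nonneg) ?_
    ((tendsto_const_nhds (x := c)).div_atTop (tendsto_pow_atTop hn)))
  filter_upwards [hfg] with s hs
  rwa [dist_comm, Real.dist_eq]

theorem alpha_expansion_s_to_infty (Δ ε : ℝ) :
    let α : ℝ → ℝ := fun s =>
      (1 - 2 * ε) * s *
        (erf ((Δ + 1 / (2 * s)) / Real.sqrt 2) - erf ((Δ - 1 / (2 * s)) / Real.sqrt 2))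
    let A : ℝ := (1 - 2 * ε) * Real.sqrt (2 / π) * Real.exp (-Δ ^ 2 / 2)
    (∃ c : ℝ, ∀ᶠ s in atTop,
        |α s - A * (1 + (Δ ^ 2 - 1) / (24 * s ^ 2))| ≤ c / s ^ 4) ∧
      Tendsto α atTop (nhds A) := by
  intro α A
  set c := |1 - 2 * ε| * √(2 / π) / 160
  have hrem : ∀ᶠ s in atTop, |α s - A * (1 + (Δ ^ 2 - 1) / (24 * s ^ 2))| ≤ c / s ^ 4 := by
    filter_upwards [eventually_gt_atTop 0] with s hs
    have key := abs_erf_central_difference_sub_le Δ (h := 1 / (2 * s)) (by positivity)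
    have hα : α s - A * (1 + (Δ ^ 2 - 1) / (24 * s ^ 2)) = (1 - 2 * ε) * s *
        (erf ((Δ + 1 / (2 * s)) / √2) - erf ((Δ - 1 / (2 * s)) / √2)
          - 2 * (1 / (2 * s)) * (√(2 / π) * exp (-(Δ ^ 2 / 2)))
          - (1 / (2 * s)) ^ 3 / 3 * (√(2 / π) * ((Δ ^ 2 - 1) * exp (-(Δ ^ 2 / 2))))) := by
      simp only [α, A, neg_div]
      field_simp
      ring
    rw [hα, abs_mul, abs_mul, abs_of_pos hs]
    calc _ ≤ |1 - 2 * ε| * s * (√(2 / π) / 5 * (1 / (2 * s)) ^ 5) := by gcongr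
      _ = c / s ^ 4 := by field_simp; ring
  have hpoly : Tendsto (fun s => A * (1 + (Δ ^ 2 - 1) / (24 * s ^ 2))) atTop (nhds A) := by
    simpa using ((tendsto_const_nhds.div_atTop
      ((tendsto_pow_atTop two_ne_zero).const_mul_atTop (by norm_num : (0 : ℝ) < 24))).const_add
      1).const_mul A
  exact ⟨⟨c, hrem⟩, tendsto_of_abs_sub_le_div_pow four_ne_zero hpoly hrem⟩
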